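/- arXiv:2111.13250 — 2 statements merged into one kernel-verified Lean document; each statement's English description precedes it below -/
import Mathlib

section
/- Let (X, 𝔅) be a measurable space with a probability measure μ, and let P be a positive linear contraction on L²(μ) which preserves μ (∫ Pf dμ = ∫ f dμ for bounded f) and satisfies the Harnack inequality |Pf(x)|² ≤ (Pf²(y))·e^{c·ρ(x,y)²} for all bounded measurable f ≥ 0 and all x, y, where ρ : X × X → [0,∞] is measurable and c > 0. Then for each θ ∈ (1,2), if C(θ) := ∫∫ e^{(2θ/(2−θ))·c·ρ(x,y)²} dμ(x)dμ(y) < ∞, we have ‖Pf‖_{L^{2θ}(μ)} ≤ C(θ)^{(2−θ)/(4θ)}‖f‖_{L²(μ)}. -/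
open MeasureTheory ENNReal

/-- Abstract core of the hypercontractivity corollary: if a positive linear contraction `P`
of `L²(μ)` preserving the probability measure `μ` satisfies the Harnack inequality
`|Pf(x)|² ≤ (Pf²)(y)·e^{c ρ(x,y)²}`, then, for `θ ∈ (1,2)` with
`C(θ) := ∫∫ e^{(2θ/(2−θ)) c ρ(x,y)²} dμ dμ < ∞`,
`‖Pf‖_{L^{2θ}} ≤ C(θ)^{(2−θ)/(4θ)} ‖f‖_{L²}`. -/
theorem stmt_15 {X : Type*} [MeasurableSpace X] (μ : Measure X) [IsProbabilityMeasure μ]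
    (P : (X → ℝ) → X → ℝ) (ρ : X → X → ℝ) (c : ℝ) (hc : 0 < c)
    (f : X → ℝ) (hfmeas : Measurable f) (hfbdd : ∃ B, ∀ x, |f x| ≤ B)
    (hfpos : ∀ x, 0 ≤ f x)
    (hPfmeas : Measurable (P f)) (hPf2meas : Measurable (P fun z => (f z) ^ 2))
    (θ : ℝ) (hθ1 : 1 < θ) (hθ2 : θ < 2)
    (hHarnack : ∀ x y : X,
      (P f x) ^ 2 ≤ P (fun z => (f z) ^ 2) y * Real.exp (c * (ρ x y) ^ 2))
    (hContr : ∫ x, (P f x) ^ 2 ∂μ ≤ ∫ x, (f x) ^ 2 ∂μ)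
    (hInv : ∫ x, P (fun z => (f z) ^ 2) x ∂μ = ∫ x, (f x) ^ 2 ∂μ)
    (hIntP : Integrable (fun x => |P f x| ^ (2 * θ)) μ)
    (hIntExp : Integrable
      (fun p : X × X => Real.exp ((2 * θ / (2 - θ)) * c * (ρ p.1 p.2) ^ 2)) (μ.prod μ))
    (Cθ : ℝ)
    (hCθ : Cθ = ∫ p : X × X,
      Real.exp ((2 * θ / (2 - θ)) * c * (ρ p.1 p.2) ^ 2) ∂(μ.prod μ)) :
    (∫ x, |P f x| ^ (2 * θ) ∂μ) ^ (1 / (2 * θ))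
      ≤ Cθ ^ ((2 - θ) / (4 * θ)) * (∫ x, (f x) ^ 2 ∂μ) ^ ((1 : ℝ) / 2) := by
  have hθ0 : (0:ℝ) < θ := by linarith
  have h2θ : (0:ℝ) < 2 - θ := by linarith
  set g : X → ℝ := P (fun z => (f z) ^ 2) with hg
  -- g is pointwise nonnegative, from Harnack with x = y
  have hv0 : ∀ y, 0 ≤ g y := by
    intro y
    have h := hHarnack y y
    nlinarith [Real.exp_pos (c * (ρ y y) ^ 2), sq_nonneg (P f y)]
  have hI2 : 0 ≤ ∫ x, (f x) ^ 2 ∂μ := integral_nonneg fun x => sq_nonneg _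
  have hCθ0 : 0 ≤ Cθ := hCθ ▸ integral_nonneg fun p => (Real.exp_pos _).le
  set I2 : ℝ := ∫ x, (f x) ^ 2 ∂μ with hI2def
  -- (P f)^2 is integrable since |P f|^(2θ) is and μ is finite
  have hPfsqInt : Integrable (fun x => (P f x) ^ 2) μ := by
    refine Integrable.mono' ((integrable_const (1:ℝ)).add hIntP)
      ((hPfmeas.pow_const 2).aestronglyMeasurable) (Filter.Eventually.of_forall fun x => ?_)
    simp only [Pi.add_apply]
    have habs : (0:ℝ) ≤ |P f x| ^ (2 * θ) := Real.rpow_nonneg (abs_nonneg _) _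
    rcases le_or_gt (|P f x|) 1 with h1 | h1
    · have : (P f x) ^ 2 ≤ 1 := by nlinarith [abs_nonneg (P f x), sq_abs (P f x)]
      rw [Real.norm_eq_abs, abs_of_nonneg (sq_nonneg _)]
      linarith
    · have h2 : |P f x| ^ (2:ℝ) ≤ |P f x| ^ (2 * θ) :=
        Real.rpow_le_rpow_of_exponent_le h1.le (by nlinarith)
      have h3 : |P f x| ^ (2:ℝ) = (P f x) ^ 2 := by
        rw [show (2:ℝ) = ((2:ℕ):ℝ) by norm_num, Real.rpow_natCast, sq_abs]
      rw [Real.norm_eq_abs, abs_of_nonneg (sq_nonneg _)]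
      linarith [h3 ▸ h2]
  by_cases hi : Integrable g μ
  · -- main case
    set π := μ.prod μ with hπ
    set u : X → ℝ≥0∞ := fun x => ENNReal.ofReal ((P f x) ^ 2) with hu
    set v : X → ℝ≥0∞ := fun y => ENNReal.ofReal (g y) with hv
    set w : X × X → ℝ≥0∞ := fun p => ENNReal.ofReal (Real.exp (c * (ρ p.1 p.2) ^ 2)) with hw
    have hu_meas : Measurable u := (hPfmeas.pow_const 2).ennreal_ofReal
    have hv_meas : Measurable v := hPf2meas.ennreal_ofReal
    -- a.e.-measurability of w, extracted from integrability hypothesis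
    have hKne : (2 * θ / (2 - θ)) * c ≠ 0 := by positivity
    have hρ2 : AEMeasurable (fun p : X × X => (ρ p.1 p.2) ^ 2) π := by
      have hgexp := hIntExp.aestronglyMeasurable.aemeasurable
      have hlog := Real.measurable_log.comp_aemeasurable hgexp
      simp only [Function.comp_def, Real.log_exp] at hlog
      have h5 := hlog.const_mul ((2 * θ / (2 - θ)) * c)⁻¹
      have heq : (fun p : X × X => ((2 * θ / (2 - θ)) * c)⁻¹
          * ((2 * θ / (2 - θ)) * c * (ρ p.1 p.2) ^ 2)) = fun p : X × X => (ρ p.1 p.2) ^ 2 := by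
        funext p
        rw [inv_mul_cancel_left₀ hKne]
      exact heq ▸ h5
    have hw_meas : AEMeasurable w π :=
      ENNReal.measurable_ofReal.comp_aemeasurable
        (Real.measurable_exp.comp_aemeasurable (hρ2.const_mul c))
    -- pointwise Harnack bound in ℝ≥0∞
    have hpt : ∀ p : X × X,
        (u p.1) ^ θ ≤ ((u p.1) ^ (θ/2) * (v p.2) ^ (θ/2)) * (w p) ^ (θ/2) := by
      intro p
      have h1 : u p.1 ≤ v p.2 * w p := by
        rw [hu, hv, hw, ← ENNReal.ofReal_mul (hv0 p.2)]
        exact ENNReal.ofReal_le_ofReal (hHarnack p.1 p.2)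
      calc (u p.1) ^ θ = (u p.1) ^ (θ/2) * (u p.1) ^ (θ/2) := by
            rw [← ENNReal.rpow_add_of_nonneg _ _ (by linarith) (by linarith)]
            norm_num
        _ ≤ (u p.1) ^ (θ/2) * ((v p.2) * w p) ^ (θ/2) :=
            mul_le_mul' le_rfl (ENNReal.rpow_le_rpow h1 (by linarith))
        _ = _ := by rw [ENNReal.mul_rpow_of_nonneg _ _ (by linarith : (0:ℝ) ≤ θ/2), mul_assoc]
    -- Hölder's inequality on the product space
    have hconj : (2/θ).HolderConjugate (2/(2-θ)) := by
      rw [Real.holderConjugate_iff]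
      constructor
      · rw [lt_div_iff₀ hθ0]; linarith
      · rw [inv_div, inv_div]; ring
    have hΦ : AEMeasurable
        (fun p : X × X => (u p.1) ^ (θ/2) * (v p.2) ^ (θ/2)) π :=
      (((hu_meas.comp measurable_fst).pow_const _).mul
        ((hv_meas.comp measurable_snd).pow_const _)).aemeasurable
    have hΨ : AEMeasurable (fun p : X × X => (w p) ^ (θ/2)) π := hw_meas.pow_const _
    have hHold := ENNReal.lintegral_mul_le_Lp_mul_Lq π hconj hΦ hΨ
    -- identify the first factor
    have hfac1 : ∫⁻ p : X × X, ((u p.1) ^ (θ/2) * (v p.2) ^ (θ/2)) ^ (2/θ) ∂π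
        = (∫⁻ x, u x ∂μ) * (∫⁻ y, v y ∂μ) := by
      have hexp1 : θ/2 * (2/θ) = 1 := by field_simp
      have : ∀ p : X × X, ((u p.1) ^ (θ/2) * (v p.2) ^ (θ/2)) ^ (2/θ) = u p.1 * v p.2 := by
        intro p
        rw [ENNReal.mul_rpow_of_nonneg _ _ (by positivity : (0:ℝ) ≤ 2/θ),
          ← ENNReal.rpow_mul, ← ENNReal.rpow_mul, hexp1, ENNReal.rpow_one, ENNReal.rpow_one]
      simp_rw [this]
      exact lintegral_prod_mul hu_meas.aemeasurable hv_meas.aemeasurable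
    have hlint_u : ∫⁻ x, u x ∂μ ≤ ENNReal.ofReal I2 := by
      rw [hu, ← ofReal_integral_eq_lintegral_ofReal hPfsqInt
        (Filter.Eventually.of_forall fun x => sq_nonneg _)]
      exact ENNReal.ofReal_le_ofReal hContr
    have hlint_v : ∫⁻ y, v y ∂μ = ENNReal.ofReal I2 := by
      rw [hv, ← ofReal_integral_eq_lintegral_ofReal hi
        (Filter.Eventually.of_forall hv0), hInv]
    -- bound the second factor
    have hfac2 : ∫⁻ p : X × X, ((w p) ^ (θ/2)) ^ (2/(2-θ)) ∂π ≤ ENNReal.ofReal Cθ := by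
      have hbd : ∀ p : X × X, ((w p) ^ (θ/2)) ^ (2/(2-θ))
          ≤ ENNReal.ofReal (Real.exp ((2 * θ / (2 - θ)) * c * (ρ p.1 p.2) ^ 2)) := by
        intro p
        rw [hw, ← ENNReal.rpow_mul,
          ENNReal.ofReal_rpow_of_nonneg (Real.exp_pos _).le (by positivity),
          ← Real.exp_mul]
        refine ENNReal.ofReal_le_ofReal (Real.exp_le_exp.2 ?_)
        have hρp : (0:ℝ) ≤ (ρ p.1 p.2) ^ 2 := sq_nonneg _
        rw [show θ/2 * (2/(2-θ)) = θ/(2-θ) by field_simp]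
        have hdd : θ/(2-θ) ≤ 2*θ/(2-θ) := by
          gcongr
          · linarith
          
        nlinarith [mul_le_mul_of_nonneg_right hdd (mul_nonneg hc.le hρp)]
      calc ∫⁻ p : X × X, ((w p) ^ (θ/2)) ^ (2/(2-θ)) ∂π
          ≤ ∫⁻ p : X × X,
              ENNReal.ofReal (Real.exp ((2 * θ / (2 - θ)) * c * (ρ p.1 p.2) ^ 2)) ∂π :=
            lintegral_mono hbd
        _ = ENNReal.ofReal Cθ := by
            rw [hCθ, ofReal_integral_eq_lintegral_ofReal hIntExp
              (Filter.Eventually.of_forall fun p => (Real.exp_pos _).le)]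
    -- put everything together in ℝ≥0∞
    set A : ℝ := ∫ x, |P f x| ^ (2 * θ) ∂μ with hA
    have hA0 : 0 ≤ A := integral_nonneg fun x => Real.rpow_nonneg (abs_nonneg _) _
    have hAeq : ENNReal.ofReal A = ∫⁻ x, (u x) ^ θ ∂μ := by
      rw [hA, ofReal_integral_eq_lintegral_ofReal hIntP
        (Filter.Eventually.of_forall fun x => Real.rpow_nonneg (abs_nonneg _) _)]
      refine lintegral_congr fun x => ?_
      simp only [hu]
      rw [ENNReal.ofReal_rpow_of_nonneg (sq_nonneg (P f x)) hθ0.le]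
      congr 1
      rw [← sq_abs, ← Real.rpow_natCast (|P f x|) 2, ← Real.rpow_mul (abs_nonneg _)]
      norm_num [mul_comm]
    have hAprod : (∫⁻ x, (u x) ^ θ ∂μ) = ∫⁻ p : X × X, (u p.1) ^ θ ∂π := by
      have := lintegral_prod_mul (μ := μ) (ν := μ)
        (f := fun x => (u x) ^ θ) (g := fun _ : X => (1:ℝ≥0∞))
        ((hu_meas.pow_const _).aemeasurable) aemeasurable_const
      simpa using this.symm
    have hmain : ENNReal.ofReal A
        ≤ (ENNReal.ofReal I2 * ENNReal.ofReal I2) ^ (θ/2)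
          * (ENNReal.ofReal Cθ) ^ ((2-θ)/2) := by
      rw [hAeq, hAprod]
      calc ∫⁻ p : X × X, (u p.1) ^ θ ∂π
          ≤ ∫⁻ p : X × X,
              (((fun q : X × X => (u q.1) ^ (θ/2) * (v q.2) ^ (θ/2))
                * (fun q : X × X => (w q) ^ (θ/2))) p) ∂π :=
            lintegral_mono fun p => hpt p
        _ ≤ (∫⁻ p : X × X, ((u p.1) ^ (θ/2) * (v p.2) ^ (θ/2)) ^ (2/θ) ∂π) ^ (1/(2/θ))
            * (∫⁻ p : X × X, ((w p) ^ (θ/2)) ^ (2/(2-θ)) ∂π) ^ (1/(2/(2-θ))) := hHold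
        _ ≤ (ENNReal.ofReal I2 * ENNReal.ofReal I2) ^ (θ/2)
            * (ENNReal.ofReal Cθ) ^ ((2-θ)/2) := by
            rw [one_div_div, one_div_div]
            refine mul_le_mul' (ENNReal.rpow_le_rpow ?_ (by positivity))
              (ENNReal.rpow_le_rpow hfac2 (by positivity))
            rw [hfac1, hlint_v]
            exact mul_le_mul' hlint_u le_rfl
    -- convert back to a real inequality
    have hreal : A ≤ I2 ^ θ * Cθ ^ ((2-θ)/2) := by
      rw [← ENNReal.ofReal_le_ofReal_iff (by positivity)]
      refine hmain.trans_eq ?_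
      rw [← ENNReal.ofReal_mul hI2,
        ENNReal.ofReal_rpow_of_nonneg (mul_nonneg hI2 hI2) (by positivity),
        ENNReal.ofReal_rpow_of_nonneg hCθ0 (by positivity),
        ← ENNReal.ofReal_mul (by positivity)]
      congr 2
      rw [show I2 * I2 = I2 ^ (2:ℝ) by
          rw [show (2:ℝ) = ((2:ℕ):ℝ) by norm_num, Real.rpow_natCast]; ring,
        ← Real.rpow_mul hI2]
      congr 1
      ring
    -- final real computation
    have hfin := Real.rpow_le_rpow hA0 hreal (by positivity : (0:ℝ) ≤ 1/(2*θ))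
    refine hfin.trans_eq ?_
    rw [Real.mul_rpow (Real.rpow_nonneg hI2 _) (Real.rpow_nonneg hCθ0 _),
      ← Real.rpow_mul hI2, ← Real.rpow_mul hCθ0]
    rw [show θ * (1/(2*θ)) = 1/2 by field_simp,
      show (2-θ)/2 * (1/(2*θ)) = (2-θ)/(4*θ) by
        rw [div_mul_div_comm, mul_one]; congr 1; ring]
    ring
  · -- degenerate case: P f² not integrable, so ∫ f² = 0 and P f = 0 a.e.
    have h0 : ∫ x, g x ∂μ = 0 := integral_undef hi
    have hI20 : I2 = 0 := by rw [← hInv]; exact h0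
    have hPf0 : ∫ x, (P f x) ^ 2 ∂μ = 0 :=
      le_antisymm (hContr.trans_eq hI20) (integral_nonneg fun x => sq_nonneg _)
    have hae : (fun x => (P f x) ^ 2) =ᵐ[μ] 0 :=
      (integral_eq_zero_iff_of_nonneg (fun x => sq_nonneg _) hPfsqInt).mp hPf0
    have hA0' : ∫ x, |P f x| ^ (2 * θ) ∂μ = 0 := by
      rw [← integral_zero X ℝ (μ := μ)]
      refine integral_congr_ae (hae.mono fun x hx => ?_)
      have : P f x = 0 := by
        have := hx
        simp only [Pi.zero_apply] at this
        nlinarith [sq_nonneg (P f x)]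
      simp [this, Real.zero_rpow (by positivity : 1/(2*θ) ≠ 0),
        Real.zero_rpow (by positivity : 2*θ ≠ 0)]
    rw [hA0', hI20, Real.zero_rpow (by positivity : 1/(2*θ) ≠ 0),
      Real.zero_rpow (by norm_num : (1:ℝ)/2 ≠ 0), mul_zero]
end

section
/- Suppose a semigroup P(t) of positive linear operators on bounded Borel functions on a Hilbert space X satisfies, for some t₀ > 0 and constant c > 0, the log-Harnack inequality P(t₀)(ln f)(x + h) ≤ ln(P(t₀)f(x)) + c‖h‖_C² for all bounded Borel f with inf f > 0 and all h in a dense linear subspace H₀ of H_C, where each P(t₀)f is continuous on X. Then for every bounded Borel f ≥ 0 and x ∈ X, lim_{h → 0 in H₀, ‖h‖_C → 0} P(t₀)f(x + h) = P(t₀)f(x). -/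
/-!
Perturb a bounded `f ≥ 0` to `1 + η f`, which is bounded below and so admissible in the
log-Harnack inequality. Since `r - r² ≤ log (1 + r) ≤ r`, its left side is at least
`η P f (x + h) - η² B²` and its right side at most `η P f x + c ‖h‖²`, giving
`P f (x + h) ≤ P f x + η B² + c ‖h‖² / η`. Taking `η = ‖h‖` and exchanging the roles of `x`
and `x + h` yields the Lipschitz bound `|P f (x + h) - P f x| ≤ (B² + c) ‖h‖`.
-/

open Real

theorem Real.sub_sq_le_log_one_add {r : ℝ} (hr : 0 ≤ r) : r - r ^ 2 ≤ log (1 + r) := by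
  refine le_trans ?_ (le_log_one_add_of_nonneg hr)
  rw [le_div_iff₀ (by linarith)]
  nlinarith [pow_nonneg hr 3]

theorem LinearMap.apply_const_add_mul {X : Type*} (P : (X → ℝ) →ₗ[ℝ] (X → ℝ))
    (hone : P (fun _ => 1) = fun _ => 1) (a b : ℝ) (f : X → ℝ) (y : X) :
    P (fun z => a + b * f z) y = a + b * P f y := by
  have hfun : (fun z => a + b * f z) = a • (fun _ => (1 : ℝ)) + b • f := by
    funext z; simp
  rw [hfun, map_add, map_smul, map_smul, hone]
  simp

section LogHarnack

variable {X HC : Type*} [AddCommGroup X] [Module ℝ X] [MeasurableSpace X]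
  [NormedAddCommGroup HC] [Module ℝ HC]

def LogHarnack (P : (X → ℝ) →ₗ[ℝ] (X → ℝ)) (ι : HC →ₗ[ℝ] X) (H₀ : Submodule ℝ HC)
    (c : ℝ) : Prop :=
  ∀ f : X → ℝ, Measurable f → (∃ B, ∀ x, |f x| ≤ B) → (∃ ε > 0, ∀ x, ε ≤ f x) →
    ∀ x : X, ∀ h ∈ H₀, P (fun z => log (f z)) (x + ι h) ≤ log (P f x) + c * ‖h‖ ^ 2

variable {P : (X → ℝ) →ₗ[ℝ] (X → ℝ)} {ι : HC →ₗ[ℝ] X} {H₀ : Submodule ℝ HC} {c : ℝ}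

theorem LogHarnack.apply_add_le (hP : LogHarnack P ι H₀ c) (hmono : Monotone P)
    (hone : P (fun _ => 1) = fun _ => 1) {f : X → ℝ} {B η : ℝ} (hfm : Measurable f)
    (hf0 : ∀ z, 0 ≤ f z) (hfB : ∀ z, f z ≤ B) (hη : 0 < η) (y : X) {h : HC} (hh : h ∈ H₀) :
    P f (y + ι h) ≤ P f y + η * B ^ 2 + c * ‖h‖ ^ 2 / η := by
  have hηf : ∀ z, 0 ≤ η * f z := fun z => mul_nonneg hη.le (hf0 z)
  have hgm : Measurable fun z => 1 + η * f z := measurable_const.add (hfm.const_mul η)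
  have hgb : ∃ B', ∀ z, |1 + η * f z| ≤ B' := ⟨1 + η * B, fun z => by
    rw [abs_of_nonneg (by linarith [hηf z])]
    linarith [mul_le_mul_of_nonneg_left (hfB z) hη.le]⟩
  have hg1 : ∃ ε > 0, ∀ z, ε ≤ 1 + η * f z := ⟨1, one_pos, fun z => by linarith [hηf z]⟩
  have hlog_lower : ∀ z, -(η ^ 2 * B ^ 2) + η * f z ≤ log (1 + η * f z) := fun z => by
    have hsq : (η * f z) ^ 2 ≤ η ^ 2 * B ^ 2 := by
      rw [mul_pow]
      gcongr
      exacts [hf0 z, hfB z]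
    linarith [Real.sub_sq_le_log_one_add (hηf z)]
  have hlower : -(η ^ 2 * B ^ 2) + η * P f (y + ι h)
      ≤ P (fun z => log (1 + η * f z)) (y + ι h) := by
    rw [← P.apply_const_add_mul hone]
    exact hmono hlog_lower _
  have hupper : log (P (fun z => 1 + η * f z) y) ≤ η * P f y := by
    rw [P.apply_const_add_mul hone]
    have hPf : 0 ≤ P f y := by simpa using hmono (show 0 ≤ f from hf0) y
    linarith [log_le_sub_one_of_pos (by positivity : 0 < 1 + η * P f y)]
  have hLH := hP _ hgm hgb hg1 y h hh
  refine le_of_mul_le_mul_left ?_ hη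
  rw [mul_add, mul_add, mul_div_cancel₀ _ hη.ne']
  linarith

theorem LogHarnack.abs_apply_add_sub_le (hP : LogHarnack P ι H₀ c) (hmono : Monotone P)
    (hone : P (fun _ => 1) = fun _ => 1) {f : X → ℝ} {B : ℝ} (hfm : Measurable f)
    (hf0 : ∀ z, 0 ≤ f z) (hfB : ∀ z, f z ≤ B) (x : X) {h : HC} (hh : h ∈ H₀) :
    |P f (x + ι h) - P f x| ≤ (B ^ 2 + c) * ‖h‖ := by
  have key : ∀ y, ∀ k ∈ H₀, P f (y + ι k) ≤ P f y + (B ^ 2 + c) * ‖k‖ := by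
    intro y k hk
    rcases eq_or_ne k 0 with rfl | hne
    · simp
    · have hpos := norm_pos_iff.mpr hne
      have := hP.apply_add_le hmono hone hfm hf0 hfB hpos y hk
      rw [show c * ‖k‖ ^ 2 / ‖k‖ = c * ‖k‖ by field_simp] at this
      linarith
  have hback := key (x + ι h) (-h) (neg_mem hh)
  rw [map_neg, add_neg_cancel_right, norm_neg] at hback
  rw [abs_sub_le_iff]
  constructor <;> linarith [key x h hh]

end LogHarnack

/-- `P` is `P(t₀)`, and `H_C` sits inside `X` through `ι`. -/
theorem stmt_17_general {X HC : Type*}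
    [NormedAddCommGroup X] [InnerProductSpace ℝ X] [MeasurableSpace X]
    [NormedAddCommGroup HC] [InnerProductSpace ℝ HC]
    (ι : HC →ₗ[ℝ] X)
    (H₀ : Submodule ℝ HC)
    (P : (X → ℝ) →ₗ[ℝ] (X → ℝ))
    (hmono : ∀ f g : X → ℝ, (∀ x, f x ≤ g x) → ∀ x, P f x ≤ P g x)
    (hone : P (fun _ => 1) = fun _ => 1)
    (c : ℝ) (hc : 0 < c)
    (hLogHarnack : ∀ f : X → ℝ, Measurable f → (∃ B, ∀ x, |f x| ≤ B) →
      (∃ ε > 0, ∀ x, ε ≤ f x) → ∀ x : X, ∀ h ∈ H₀,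
        P (fun z => Real.log (f z)) (x + ι h) ≤ Real.log (P f x) + c * ‖h‖ ^ 2) :
    ∀ f : X → ℝ, Measurable f → (∃ B, ∀ x, |f x| ≤ B) → (∀ x, 0 ≤ f x) →
      ∀ x : X, ∀ ε > 0, ∃ δ > 0, ∀ h ∈ H₀, ‖h‖ < δ →
        |P f (x + ι h) - P f x| < ε := by
  intro f hfm ⟨B, hB⟩ hf0 x ε hε
  have hL : 0 < B ^ 2 + c := by positivity
  refine ⟨ε / (B ^ 2 + c), by positivity, fun h hh hhδ => ?_⟩
  calc |P f (x + ι h) - P f x|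
      ≤ (B ^ 2 + c) * ‖h‖ :=
        LogHarnack.abs_apply_add_sub_le hLogHarnack (fun f g hfg => hmono f g hfg) hone hfm hf0
          (fun z => (le_abs_self _).trans (hB z)) x hh
    _ < ε := by rwa [lt_div_iff₀' hL] at hhδ

/-- Strong Feller-type property derived from a log-Harnack inequality.  `P` is the
(positive, linear, Markovian) operator `P(t₀)` acting on functions on `X`; `HC` is the
Hilbert space `H_C` embedded in `X` through `ι`; `H₀` is a dense linear subspace of `HC`.
If the log-Harnack inequality holds along `H₀` and `P f` is continuous for every bounded
Borel `f`, then `P f (x + h) → P f x` as `h → 0` in `H₀` (w.r.t. `‖·‖_C`) for every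
bounded Borel `f ≥ 0`. -/
theorem stmt_17 {X HC : Type*}
    [NormedAddCommGroup X] [InnerProductSpace ℝ X] [CompleteSpace X] [MeasurableSpace X] [BorelSpace X]
    [NormedAddCommGroup HC] [InnerProductSpace ℝ HC] [CompleteSpace HC]
    (ι : HC →ₗ[ℝ] X) (hι : Function.Injective ι)
    (H₀ : Submodule ℝ HC) (hdense : Dense (H₀ : Set HC))
    (P : (X → ℝ) →ₗ[ℝ] (X → ℝ))
    (hmono : ∀ f g : X → ℝ, (∀ x, f x ≤ g x) → ∀ x, P f x ≤ P g x)
    (hone : P (fun _ => 1) = fun _ => 1)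
    (hcont : ∀ f : X → ℝ, Measurable f → (∃ B, ∀ x, |f x| ≤ B) → Continuous (P f))
    (c : ℝ) (hc : 0 < c)
    (hLogHarnack : ∀ f : X → ℝ, Measurable f → (∃ B, ∀ x, |f x| ≤ B) →
      (∃ ε > 0, ∀ x, ε ≤ f x) → ∀ x : X, ∀ h ∈ H₀,
        P (fun z => Real.log (f z)) (x + ι h) ≤ Real.log (P f x) + c * ‖h‖ ^ 2) :
    ∀ f : X → ℝ, Measurable f → (∃ B, ∀ x, |f x| ≤ B) → (∀ x, 0 ≤ f x) →
      ∀ x : X, ∀ ε > 0, ∃ δ > 0, ∀ h ∈ H₀, ‖h‖ < δ →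
        |P f (x + ι h) - P f x| < ε :=
  stmt_17_general ι H₀ P hmono hone c hc hLogHarnack
end
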